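/- arXiv:2102.11674 — 9 statements merged into one kernel-verified Lean document; each statement's English description precedes it below -/
import Mathlib

section
/- There exist constants C > 0 and K such that for every integer k ≥ K there is a finite vertex set V and a family E of k-element subsets of V with |E| ≤ 2^(k + C·(k·log₂ k)^(1/2)) such that for every coloring c : V → Bool there is an edge e ∈ E on which c is constant (i.e., the k-uniform hypergraph (V, E) is not two-colorable). -/
/-!
Erdős's counting argument. On `n = 2k²` vertices every coloring has a color class of at least
`k²` vertices, hence at least `C(k², k) ≥ 2^-(k+3) C(n, k)` monochromatic `k`-sets. Of the
`C(n, k)^m` sequences of `m = 2^(k+3) n` edges, at most `(C(n, k) - C(k², k))^m` avoid the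
monochromatic sets of a given coloring, and `2^n` times this is less than `C(n, k)^m` since
`(1 - 1/P)^P < 1/2`. So some sequence meets a monochromatic set of every coloring; it has at most
`2^(k+4) k² = 2^(k + O(log k))` edges.
-/

open Finset Real

theorem exists_fun_forall_exists_notMem_of_card_mul_pow_lt {α β : Type*} [Fintype α]
    (S : Finset β) (B : α → Finset β) {b m : ℕ} (hB : ∀ a, #(B a) ≤ b)
    (h : Fintype.card α * b ^ m < #S ^ m) :
    ∃ f : Fin m → β, (∀ i, f i ∈ S) ∧ ∀ a, ∃ i, f i ∉ B a := by
  classical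
  have hlt : #(univ.biUnion fun a => Fintype.piFinset fun _ : Fin m => B a)
      < #(Fintype.piFinset fun _ : Fin m => S) :=
    calc _ ≤ ∑ a, #(Fintype.piFinset fun _ : Fin m => B a) := card_biUnion_le
      _ ≤ ∑ _a : α, b ^ m := sum_le_sum fun a _ => by
          rw [Fintype.card_piFinset_const]; exact Nat.pow_le_pow_left (hB a) m
      _ = Fintype.card α * b ^ m := by simp
      _ < _ := by rwa [Fintype.card_piFinset_const]
  obtain ⟨f, hfS, hfB⟩ := exists_mem_notMem_of_card_lt_card hlt
  refine ⟨f, Fintype.mem_piFinset.1 hfS, fun a => ?_⟩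
  by_contra! hf
  exact hfB (mem_biUnion.2 ⟨a, mem_univ a, Fintype.mem_piFinset.2 hf⟩)

def IsMonochromatic {α : Type*} (c : α → Bool) (e : Finset α) : Prop :=
  ∃ b, ∀ v ∈ e, c v = b

instance {α : Type*} (c : α → Bool) : DecidablePred (IsMonochromatic c) :=
  fun e => inferInstanceAs (Decidable (∃ b, ∀ v ∈ e, c v = b))

theorem card_filter_not_isMonochromatic_le {α : Type*} [Fintype α] (c : α → Bool) (k : ℕ)
    {t : ℕ} (ht : 2 * t ≤ Fintype.card α) :
    #{e ∈ powersetCard k univ | ¬IsMonochromatic c e} ≤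
      (Fintype.card α).choose k - t.choose k := by
  obtain ⟨b, hb⟩ := Fintype.exists_le_card_fiber_of_mul_le_card (f := c) (n := t) ht
  have hmono : t.choose k ≤ #{e ∈ powersetCard k univ | IsMonochromatic c e} :=
    calc t.choose k ≤ #(powersetCard k {v | c v = b}) := by
          rw [card_powersetCard]; exact Nat.choose_le_choose k hb
      _ ≤ _ := card_le_card fun e he => by
          rw [mem_powersetCard] at he
          exact mem_filter.2 ⟨mem_powersetCard.2 ⟨subset_univ e, he.2⟩,
            b, fun v hv => (mem_filter.1 (he.1 hv)).2⟩
  have hsplit := card_filter_add_card_filter_not (s := powersetCard k (univ : Finset α))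
    (fun e => IsMonochromatic c e)
  rw [card_powersetCard, card_univ] at hsplit
  omega

theorem succ_pow_succ_le_eight_mul {j : ℕ} (hj : 1 ≤ j) :
    (j + 1) ^ (j + 1) ≤ 8 * j ^ (j + 1) := by
  have hj' : (1 : ℝ) ≤ j := by exact_mod_cast hj
  have hinv : (j : ℝ)⁻¹ ≤ 1 := inv_le_one_of_one_le₀ hj'
  have hsplit : ((j + 1 : ℕ) : ℝ) = j * (1 + (j : ℝ)⁻¹) := by
    push_cast; field_simp
  have hfactor : (1 + (j : ℝ)⁻¹) ^ (j + 1) ≤ 8 :=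
    calc (1 + (j : ℝ)⁻¹) ^ (j + 1) = (1 + (j : ℝ)⁻¹) ^ j * (1 + (j : ℝ)⁻¹) :=
          pow_succ _ _
      _ ≤ exp 1 * 2 := by gcongr; exacts [one_add_inv_pow_le_exp, by linarith]
      _ ≤ 8 := by linarith [exp_one_lt_three]
  have : (((j + 1) ^ (j + 1) : ℕ) : ℝ) ≤ ((8 * j ^ (j + 1) : ℕ) : ℝ) := by
    rw [Nat.cast_pow, hsplit, mul_pow]
    push_cast
    nlinarith [pow_nonneg (Nat.cast_nonneg j : (0 : ℝ) ≤ j) (j + 1)]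
  exact_mod_cast this

theorem sub_pow_mul_choose_le (n N k : ℕ) : (N - k) ^ k * n.choose k ≤ n ^ k * N.choose k := by
  refine Nat.le_of_mul_le_mul_left ?_ k.factorial_pos
  calc k.factorial * ((N - k) ^ k * n.choose k) = (N - k) ^ k * n.descFactorial k := by
        rw [Nat.descFactorial_eq_factorial_mul_choose]; ring
    _ ≤ N.descFactorial k * n ^ k := Nat.mul_le_mul
        ((Nat.pow_le_pow_left (by omega) k).trans (Nat.pow_sub_le_descFactorial N k))
        (Nat.descFactorial_le_pow n k)
    _ = k.factorial * (n ^ k * N.choose k) := by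
        rw [Nat.descFactorial_eq_factorial_mul_choose]; ring

theorem choose_two_mul_sq_le {k : ℕ} (hk : 2 ≤ k) :
    (2 * k ^ 2).choose k ≤ 2 ^ (k + 3) * (k ^ 2).choose k := by
  obtain ⟨j, rfl⟩ : ∃ j, k = j + 1 := ⟨k - 1, by omega⟩
  have hsq : (j + 1) ^ 2 - (j + 1) = (j + 1) * j := by
    rw [sq, ← Nat.mul_sub_one, Nat.add_sub_cancel]
  have hpos : 0 < ((j + 1) ^ 2 - (j + 1)) ^ (j + 1) := by
    rw [hsq]; exact pow_pos (Nat.mul_pos (by omega) (by omega)) _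
  refine Nat.le_of_mul_le_mul_left ?_ hpos
  calc _ ≤ (2 * (j + 1) ^ 2) ^ (j + 1) * ((j + 1) ^ 2).choose (j + 1) :=
        sub_pow_mul_choose_le _ _ _
    _ = 2 ^ (j + 1) * ((j + 1) ^ (j + 1) * (j + 1) ^ (j + 1)) *
          ((j + 1) ^ 2).choose (j + 1) := by
        rw [mul_pow, ← pow_mul, mul_comm 2, pow_mul]; ring
    _ ≤ 2 ^ (j + 1) * (8 * j ^ (j + 1) * (j + 1) ^ (j + 1)) *
          ((j + 1) ^ 2).choose (j + 1) := by
        gcongr; exact succ_pow_succ_le_eight_mul (by omega)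
    _ = _ := by rw [hsq, mul_pow]; ring

/-- Since `M / T ≥ 1 / P` and `(1 - 1/P)^P ≤ e⁻¹ < 1/2`. -/
theorem two_pow_mul_sub_pow_lt {T M P : ℕ} (hM : 0 < M) (hMT : M ≤ T) (hTP : T ≤ P * M)
    {n : ℕ} (hn : n ≠ 0) : 2 ^ n * (T - M) ^ (P * n) < T ^ (P * n) := by
  have hP : 1 ≤ P := by
    by_contra! h; interval_cases P; omega
  have hP' : (1 : ℝ) ≤ P := by exact_mod_cast hP
  have hT : (0 : ℝ) < T := by exact_mod_cast hM.trans_le hMT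
  have hdiff : ((T - M : ℕ) : ℝ) ≤ T * (1 - 1 / P) := by
    have : (T : ℝ) ≤ P * M := by exact_mod_cast hTP
    rw [Nat.cast_sub hMT, mul_one_sub, mul_one_div, sub_le_sub_iff_left,
      div_le_iff₀ (by linarith)]
    linarith
  have hbase : 2 * (T - M) ^ P < T ^ P := by
    suffices (((2 * (T - M) ^ P : ℕ)) : ℝ) < ((T ^ P : ℕ) : ℝ) by exact_mod_cast this
    have hexp : 2 * exp (-1) < 1 := by
      rw [exp_neg, ← div_eq_mul_inv, div_lt_one (exp_pos 1)]; exact exp_one_gt_two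
    calc (((2 * (T - M) ^ P : ℕ)) : ℝ) ≤ 2 * ((T : ℝ) * (1 - 1 / P)) ^ P := by
          push_cast; gcongr
      _ = (T : ℝ) ^ P * (2 * (1 - 1 / P) ^ P) := by rw [mul_pow]; ring
      _ ≤ (T : ℝ) ^ P * (2 * exp (-1)) := by
          gcongr
          exact one_sub_div_pow_le_exp_neg hP'
      _ < (T : ℝ) ^ P := mul_lt_of_lt_one_right (pow_pos hT P) hexp
      _ = _ := by push_cast; rfl
  rw [pow_mul, pow_mul, ← mul_pow]
  exact Nat.pow_lt_pow_left hbase hn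

theorem cast_two_pow_mul_two_mul_sq_le_rpow {k : ℕ} (hk : 2 ≤ k) :
    ((2 ^ (k + 3) * (2 * k ^ 2) : ℕ) : ℝ) ≤ 2 ^ ((k : ℝ) + 6 * √(k * logb 2 k)) := by
  have hk' : (2 : ℝ) ≤ k := by exact_mod_cast hk
  set L := logb 2 (k : ℝ)
  have hL1 : 1 ≤ L := by
    rw [le_logb_iff_rpow_le one_lt_two (by linarith), rpow_one]; exact hk'
  have hLk : L ≤ k := by
    rw [logb_le_iff_le_rpow one_lt_two (by linarith), rpow_natCast]
    exact_mod_cast (Nat.lt_two_pow_self (n := k)).le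
  have hLsqrt : L ≤ √(k * L) := le_sqrt_of_sq_le (by nlinarith)
  have hcard : ((2 ^ (k + 3) * (2 * k ^ 2) : ℕ) : ℝ) = 2 ^ ((k : ℝ) + 4 + 2 * L) := by
    rw [rpow_add two_pos, mul_comm 2 L, rpow_mul two_pos.le,
      rpow_logb two_pos (by norm_num) (by linarith),
      show (k : ℝ) + 4 = ((k + 4 : ℕ) : ℝ) by push_cast; ring, rpow_natCast, rpow_two]
    push_cast; ring
  rw [hcard]
  exact rpow_le_rpow_of_exponent_le one_le_two (by linarith)

/-- There exist constants `C > 0` and `K` such that for every integer `k ≥ K` there is a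
finite vertex set (here `Fin n`) and a family `E` of `k`-element subsets with
`|E| ≤ 2 ^ (k + C * (k * log₂ k) ^ (1/2))` such that every coloring `c : V → Bool`
has a monochromatic edge, i.e. the `k`-uniform hypergraph is not two-colorable. -/
theorem erdos_gebauer_improved :
    ∃ C : ℝ, 0 < C ∧ ∃ K : ℕ, ∀ k : ℕ, K ≤ k →
      ∃ (n : ℕ) (E : Finset (Finset (Fin n))),
        (∀ e ∈ E, e.card = k) ∧
        (E.card : ℝ) ≤ (2 : ℝ) ^ ((k : ℝ) + C * Real.sqrt ((k : ℝ) * Real.logb 2 (k : ℝ))) ∧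
        ∀ c : Fin n → Bool, ∃ e ∈ E, ∃ b : Bool, ∀ v ∈ e, c v = b := by
  refine ⟨6, by norm_num, 2, fun k hk => ?_⟩
  set n := 2 * k ^ 2
  have hcount : 2 ^ n * (n.choose k - (k ^ 2).choose k) ^ (2 ^ (k + 3) * n)
      < n.choose k ^ (2 ^ (k + 3) * n) :=
    two_pow_mul_sub_pow_lt (Nat.choose_pos (Nat.le_self_pow two_ne_zero k))
      (Nat.choose_le_choose k (by omega)) (choose_two_mul_sq_le hk) (by positivity)
  obtain ⟨f, hfS, hf⟩ := exists_fun_forall_exists_notMem_of_card_mul_pow_lt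
    (powersetCard k (univ : Finset (Fin n)))
    (fun c => {e ∈ powersetCard k univ | ¬IsMonochromatic c e})
    (fun c => card_filter_not_isMonochromatic_le c k (t := k ^ 2) (by simp [n]))
    (by simpa [n] using hcount)
  refine ⟨n, univ.image f, ?_, ?_, fun c => ?_⟩
  · simp only [mem_image, mem_univ, true_and, forall_exists_index, forall_apply_eq_imp_iff]
    exact fun i => (mem_powersetCard.1 (hfS i)).2
  · calc (#(univ.image f) : ℝ) ≤ (2 ^ (k + 3) * n : ℕ) := by
          exact_mod_cast card_image_le.trans (card_fin _).le
      _ ≤ _ := cast_two_pow_mul_two_mul_sq_le_rpow hk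
  · obtain ⟨i, hi⟩ := hf c
    refine ⟨f i, mem_image_of_mem f (mem_univ i), ?_⟩
    by_contra h
    exact hi (mem_filter.2 ⟨hfS i, h⟩)
end

section
/- There exist constants C > 0 and K such that for every integer k ≥ K there is a finite vertex set V and a family E of k-element subsets of V with |E| ≤ 2^(k + C·k^(2/3)) such that for every coloring c : V → Bool there is an edge e ∈ E on which c is constant (i.e., the k-uniform hypergraph (V, E) is not two-colorable). -/
/-!
Erdős's random construction, with counting in place of probability. Take `k²` vertices and
`m = 81 k² 2^k` edges chosen independently among all `k`-sets. A coloring has a colour class of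
size at least `k²/2`, so a random `k`-set is monochromatic with probability at least
`C(k²/2, k) / C(k², k) ≥ e⁻⁴ 2⁻ᵏ`. Hence a given coloring avoids all `m` edges with probability
at most `exp (-81 e⁻⁴ k²) < 2^(-k²)`, and the union bound over the `2^(k²)` colorings leaves a
choice of edges that no coloring avoids. Finally `81 k² 2^k ≤ 2^(k + 14 k^(2/3))` because
`log k = O(k^(2/3))`.
-/

open Finset Real
open scoped Nat

theorem Finset.exists_fin_seq_forall_exists_of_card_mul_pow_lt {α ι : Type*} [Fintype ι]
    (S : Finset α) (P : ι → α → Prop) [∀ i, DecidablePred (P i)] (g m : ℕ)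
    (hg : ∀ i, g ≤ #(S.filter (P i))) (hcard : Fintype.card ι * (#S - g) ^ m < #S ^ m) :
    ∃ f : Fin m → α, (∀ j, f j ∈ S) ∧ ∀ i, ∃ j, P i (f j) := by
  classical
  by_contra! h
  have hcover : Fintype.piFinset (fun _ : Fin m ↦ S) ⊆
      univ.biUnion fun i ↦ Fintype.piFinset fun _ : Fin m ↦ S.filter (¬ P i ·) := by
    intro f hf
    obtain ⟨i, hi⟩ := h f (Fintype.mem_piFinset.1 hf)
    simpa [Fintype.mem_piFinset] using ⟨i, fun j ↦ ⟨Fintype.mem_piFinset.1 hf j, hi j⟩⟩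
  have hmiss : ∀ i, #(S.filter (¬ P i ·)) ≤ #S - g := fun i ↦ by
    have := card_filter_add_card_filter_not (s := S) (P i)
    have := hg i
    omega
  refine hcard.not_ge ?_
  calc #S ^ m = #(Fintype.piFinset fun _ : Fin m ↦ S) := by simp
    _ ≤ ∑ i, #(Fintype.piFinset fun _ : Fin m ↦ S.filter (¬ P i ·)) :=
      (card_le_card hcover).trans card_biUnion_le
    _ ≤ ∑ _i : ι, (#S - g) ^ m := sum_le_sum fun i _ ↦ by
      simpa using Nat.pow_le_pow_left (hmiss i) m
    _ = Fintype.card ι * (#S - g) ^ m := by simp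

theorem choose_card_div_two_le_card_monochromatic {V : Type*} [Fintype V] (c : V → Bool)
    (k : ℕ) :
    (Fintype.card V / 2).choose k ≤
      #{e ∈ powersetCard k univ | ∃ b, ∀ v ∈ e, c v = b} := by
  obtain ⟨b, hb⟩ : ∃ b, Fintype.card V / 2 ≤ #{v | c v = b} := by
    have := card_filter_add_card_filter_not (s := univ) (c · = true)
    simp only [Bool.not_eq_true, Finset.card_univ] at this
    by_contra! h
    have := h true
    have := h false
    omega
  calc (Fintype.card V / 2).choose k ≤ (#{v | c v = b}).choose k := Nat.choose_le_choose k hb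
    _ = #(powersetCard k {v | c v = b}) := (card_powersetCard _ _).symm
    _ ≤ _ := card_le_card fun e he ↦ by
      rw [mem_powersetCard] at he
      rw [mem_filter, mem_powersetCard]
      exact ⟨⟨subset_univ _, he.2⟩, b, fun v hv ↦ (mem_filter.1 (he.1 hv)).2⟩

theorem Real.exp_neg_two_mul_le_one_sub {x : ℝ} (hx₀ : 0 ≤ x) (hx : x ≤ 1 / 2) :
    exp (-(2 * x)) ≤ 1 - x := by
  have hpos : 0 < 1 - x := by linarith
  have hinv : (1 - x)⁻¹ ≤ exp (2 * x) := calc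
    (1 - x)⁻¹ = x / (1 - x) + 1 := by field_simp; ring
    _ ≤ exp (x / (1 - x)) := add_one_le_exp _
    _ ≤ exp (2 * x) := by
      gcongr
      rw [div_le_iff₀ hpos]
      nlinarith
  rwa [exp_neg, inv_le_comm₀ (exp_pos _) hpos]

theorem exp_neg_four_le_one_sub_two_div_pow {k : ℕ} (hk : 4 ≤ k) :
    exp (-4) ≤ (1 - 2 / k) ^ k := calc
  exp (-4) = exp (-(2 * (2 / k))) ^ k := by
    rw [← exp_nat_mul]; congr 1; field_simp; norm_num
  _ ≤ (1 - 2 / k) ^ k := by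
    have hk' : (4 : ℝ) ≤ k := by exact_mod_cast hk
    gcongr
    refine exp_neg_two_mul_le_one_sub (by positivity) ?_
    rw [div_le_iff₀ (by positivity)]
    linarith

theorem exp_neg_four_mul_choose_sq_le {k : ℕ} (hk : 4 ≤ k) :
    exp (-4) * (k ^ 2).choose k ≤ 2 ^ k * (k ^ 2 / 2).choose k := by
  set s := k ^ 2 / 2
  have hks : k ≤ s + 1 := by
    have : 2 * k ≤ k ^ 2 := by nlinarith
    omega
  -- `k! * n.choose k` is the falling factorial, squeezed between `(n + 1 - k) ^ k` and `n ^ k`.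
  have hupper : (k ! : ℝ) * (k ^ 2).choose k ≤ ((k : ℝ) ^ 2) ^ k := by
    rw [← Nat.cast_pow, ← Nat.cast_mul, ← Nat.descFactorial_eq_factorial_mul_choose]
    exact_mod_cast Nat.descFactorial_le_pow _ _
  have hlower : ((s + 1 - k : ℕ) : ℝ) ^ k ≤ k ! * s.choose k := by
    rw [← Nat.cast_pow, ← Nat.cast_mul, ← Nat.descFactorial_eq_factorial_mul_choose]
    exact_mod_cast Nat.pow_sub_le_descFactorial _ _
  have hbase : (1 - 2 / k) * (k : ℝ) ^ 2 ≤ 2 * ((s + 1 - k : ℕ) : ℝ) := by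
    have hk0 : (0 : ℝ) < k := by positivity
    have hs : (k : ℝ) ^ 2 ≤ 2 * s + 1 := by exact_mod_cast (by omega : k ^ 2 ≤ 2 * s + 1)
    rw [Nat.cast_sub hks, one_sub_div hk0.ne', div_mul_eq_mul_div, div_le_iff₀ hk0]
    push_cast
    nlinarith
  have hfactor : 0 ≤ 1 - 2 / (k : ℝ) := by
    rw [sub_nonneg, div_le_one (by positivity)]
    exact_mod_cast (by omega : 2 ≤ k)
  refine le_of_mul_le_mul_left ?_ (by positivity : (0 : ℝ) < k !)
  calc (k ! : ℝ) * (exp (-4) * (k ^ 2).choose k) ≤ (1 - 2 / k) ^ k * ((k : ℝ) ^ 2) ^ k := by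
        rw [mul_left_comm]; gcongr; exact exp_neg_four_le_one_sub_two_div_pow hk
    _ ≤ (2 * ((s + 1 - k : ℕ) : ℝ)) ^ k := by
        rw [← mul_pow]; gcongr
    _ ≤ k ! * (2 ^ k * s.choose k) := by
        rw [mul_pow, mul_left_comm]; gcongr

theorem two_pow_mul_sub_pow_lt_pow {n m : ℕ} {M G q : ℝ} (hM : 0 < M) (hqG : q * M ≤ G)
    (hGM : G ≤ M) (hnm : (n : ℝ) < m * q) : 2 ^ n * (M - G) ^ m < M ^ m := by
  have hmiss : M - G ≤ M * exp (-q) := by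
    nlinarith [one_sub_le_exp_neg q]
  calc 2 ^ n * (M - G) ^ m ≤ exp 1 ^ n * (M * exp (-q)) ^ m := by
        gcongr
        exact exp_one_gt_two.le
    _ = M ^ m * exp (n - m * q) := by
        have : exp 1 ^ n * exp (-q) ^ m = exp (n - m * q) := by
          rw [← exp_nat_mul, ← exp_nat_mul, ← exp_add]; ring_nf
        rw [mul_pow, ← this]; ring
    _ < M ^ m := mul_lt_of_lt_one_right (by positivity) (exp_lt_one_iff.2 (by linarith))

theorem two_pow_mul_choose_sub_choose_pow_lt {k : ℕ} (hk : 4 ≤ k) :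
    2 ^ k ^ 2 * ((k ^ 2).choose k - (k ^ 2 / 2).choose k) ^ (81 * k ^ 2 * 2 ^ k)
      < (k ^ 2).choose k ^ (81 * k ^ 2 * 2 ^ k) := by
  have hGM : (k ^ 2 / 2).choose k ≤ (k ^ 2).choose k :=
    Nat.choose_le_choose k (Nat.div_le_self _ _)
  have hM : 0 < (k ^ 2).choose k := Nat.choose_pos (Nat.le_self_pow two_ne_zero k)
  have hexp4 : exp 4 < 81 := calc
    exp 4 = exp 1 ^ 4 := by rw [← exp_nat_mul]; norm_num
    _ < 3 ^ 4 := by gcongr; exact exp_one_lt_three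
    _ = 81 := by norm_num
  rw [← Nat.cast_lt (α := ℝ)]
  push_cast [Nat.cast_sub hGM]
  refine two_pow_mul_sub_pow_lt_pow (q := exp (-4) / 2 ^ k) (by exact_mod_cast hM) ?_
    (by exact_mod_cast hGM) ?_
  · rw [div_mul_eq_mul_div, div_le_iff₀ (by positivity), mul_comm _ (2 ^ k : ℝ)]
    exact exp_neg_four_mul_choose_sq_le hk
  · push_cast
    rw [exp_neg]
    field_simp
    nlinarith [exp_pos 4]

theorem eighty_one_mul_sq_mul_two_pow_le_two_rpow {k : ℕ} (hk : 1 ≤ k) :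
    (81 * k ^ 2 * 2 ^ k : ℝ) ≤ 2 ^ ((k : ℝ) + 14 * (k : ℝ) ^ ((2 : ℝ) / 3)) := by
  set y := (k : ℝ) ^ ((2 : ℝ) / 3)
  have hk1 : (1 : ℝ) ≤ k := by exact_mod_cast hk
  have hy : 1 ≤ y := one_le_rpow hk1 (by norm_num)
  have hlog : log k ≤ 3 / 2 * y := by
    have := log_le_rpow_div (by positivity : (0 : ℝ) ≤ k) (by norm_num : (0 : ℝ) < 2 / 3)
    linarith
  have h81 : (81 : ℝ) ≤ 2 ^ (7 * y) := calc
    (81 : ℝ) ≤ 2 ^ (7 : ℝ) := by norm_num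
    _ ≤ 2 ^ (7 * y) := rpow_le_rpow_of_exponent_le (by norm_num) (by linarith)
  have hsq : (k : ℝ) ^ 2 ≤ 2 ^ (7 * y) := by
    rw [← exp_log (by positivity : (0 : ℝ) < k ^ 2), rpow_def_of_pos two_pos, log_pow]
    refine exp_le_exp.2 ?_
    push_cast
    nlinarith [log_two_gt_d9]
  calc (81 * k ^ 2 * 2 ^ k : ℝ) ≤ 2 ^ (7 * y) * 2 ^ (7 * y) * 2 ^ k := by gcongr
    _ = 2 ^ ((k : ℝ) + 14 * y) := by
      rw [rpow_add two_pos, ← rpow_natCast 2 k, show 14 * y = 7 * y + 7 * y by ring,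
        rpow_add two_pos]
      ring

theorem exists_uniform_family_card_le_forall_monochromatic {k : ℕ} (hk : 4 ≤ k) :
    ∃ E : Finset (Finset (Fin (k ^ 2))), (∀ e ∈ E, #e = k) ∧ #E ≤ 81 * k ^ 2 * 2 ^ k ∧
      ∀ c : Fin (k ^ 2) → Bool, ∃ e ∈ E, ∃ b, ∀ v ∈ e, c v = b := by
  obtain ⟨f, hfS, hfhit⟩ := exists_fin_seq_forall_exists_of_card_mul_pow_lt
    (powersetCard k univ) (fun (c : Fin (k ^ 2) → Bool) e ↦ ∃ b, ∀ v ∈ e, c v = b)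
    ((k ^ 2 / 2).choose k) (81 * k ^ 2 * 2 ^ k)
    (fun c ↦ by simpa using choose_card_div_two_le_card_monochromatic c k)
    (by simpa using two_pow_mul_choose_sub_choose_pow_lt hk)
  refine ⟨univ.image f, ?_, ?_, fun c ↦ ?_⟩
  · simp only [mem_image, mem_univ, true_and, forall_exists_index, forall_apply_eq_imp_iff]
    exact fun j ↦ (mem_powersetCard.1 (hfS j)).2
  · simpa using card_image_le (s := univ) (f := f)
  · obtain ⟨j, hj⟩ := hfhit c
    exact ⟨f j, mem_image_of_mem f (mem_univ j), hj⟩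

/-- There exist constants `C > 0` and `K` such that for every integer `k ≥ K` there is a
finite vertex set (here `Fin n`) and a family `E` of `k`-element subsets with
`|E| ≤ 2 ^ (k + C * k ^ (2/3))` such that every coloring `c : V → Bool` has a
monochromatic edge, i.e. the `k`-uniform hypergraph is not two-colorable. -/
theorem gebauer_construction :
    ∃ C : ℝ, 0 < C ∧ ∃ K : ℕ, ∀ k : ℕ, K ≤ k →
      ∃ (n : ℕ) (E : Finset (Finset (Fin n))),
        (∀ e ∈ E, e.card = k) ∧
        (E.card : ℝ) ≤ (2 : ℝ) ^ ((k : ℝ) + C * (k : ℝ) ^ ((2 : ℝ) / 3)) ∧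
        ∀ c : Fin n → Bool, ∃ e ∈ E, ∃ b : Bool, ∀ v ∈ e, c v = b := by
  refine ⟨14, by norm_num, 4, fun k hk ↦ ?_⟩
  obtain ⟨E, hEk, hEcard, hEmono⟩ := exists_uniform_family_card_le_forall_monochromatic hk
  refine ⟨k ^ 2, E, hEk, ?_, hEmono⟩
  calc (#E : ℝ) ≤ 81 * k ^ 2 * 2 ^ k := by exact_mod_cast hEcard
    _ ≤ _ := eighty_one_mul_sq_mul_two_pow_le_two_rpow (by omega)
end

section
/- Let s be a positive integer, let 0 < ε < 1 be real, let A, B ⊆ ZMod s, and set α = |B|/s. Then the number of elements x ∈ ZMod s for which |(A + x) ∩ B| ≥ (1 − ε)·α·|A| is at least (ε·α / (1 − (1 − ε)·α)) · s. -/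
/-!
Every pair `(a, b) ∈ A × B` lies in exactly one shift, namely `x = b - a`, so the overlaps
`|(A + x) ∩ B|` sum to `|A| |B| = α s |A|`. Each overlap is at most `|A|`, and the overlaps of the
`s - t` bad shifts are below `(1 - ε) α |A|`; hence `α s ≤ t + (s - t)(1 - ε) α`, which
rearranges to the claimed lower bound on the number `t` of good shifts.
-/

open Finset

theorem Set.sum_ncard_image_add_right_inter {G : Type*} [AddGroup G] [Fintype G]
    (A B : Set G) : ∑ x, (((· + x) '' A) ∩ B).ncard = A.ncard * B.ncard := by
  classical
  calc ∑ x, (((· + x) '' A) ∩ B).ncard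
      = ∑ x, ∑ a ∈ A.toFinset, if a + x ∈ B then 1 else 0 := by
        refine Fintype.sum_congr _ _ fun x => ?_
        rw [← Set.image_inter_preimage, Set.ncard_image_of_injective _ (add_left_injective x),
          sum_boole, Nat.cast_id, Set.ncard_eq_toFinset_card']
        congr 1
        ext a
        simp
    _ = ∑ a ∈ A.toFinset, ∑ y, if y ∈ B then 1 else 0 := by
        rw [sum_comm]
        exact sum_congr rfl fun a _ => Fintype.sum_equiv (Equiv.addLeft a) _ _ fun _ => rfl
    _ = A.ncard * B.ncard := by
        simp [sum_boole, Set.ncard_eq_toFinset_card', Set.toFinset_card]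

theorem Fintype.sum_le_ncard_setOf_le_mul_add {ι R : Type*} [Fintype ι] [Ring R]
    [LinearOrder R] [IsOrderedRing R] (f : ι → R) {M c : R} (hf : ∀ i, f i ≤ M) :
    ∑ i, f i ≤ {i | c ≤ f i}.ncard * M + (Fintype.card ι - {i | c ≤ f i}.ncard) * c := by
  classical
  have hcard : ({i | c ≤ f i}.ncard : R) = #{i | c ≤ f i} := by
    rw [Set.ncard_eq_toFinset_card', Set.toFinset_ofPred]
  have hcompl : (Fintype.card ι - #{i | c ≤ f i} : R) = #{i | ¬ c ≤ f i} := by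
    rw [sub_eq_iff_eq_add', ← Nat.cast_add, card_filter_add_card_filter_not, card_univ]
  rw [hcard, hcompl, ← sum_filter_add_sum_filter_not univ (fun i => c ≤ f i)]
  gcongr
  · simpa using sum_le_sum fun i (_ : i ∈ ({i | c ≤ f i} : Finset ι)) => hf i
  · simpa using sum_le_sum fun i (hi : i ∈ ({i | ¬ c ≤ f i} : Finset ι)) =>
      (not_le.mp (mem_filter.mp hi).2).le

theorem div_mul_le_of_le_add_sub_mul {ε α s t : ℝ} (hε : 0 < ε) (hα0 : 0 ≤ α) (hα1 : α ≤ 1)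
    (h : α * s ≤ t + (s - t) * ((1 - ε) * α)) : ε * α / (1 - (1 - ε) * α) * s ≤ t := by
  have hd : 0 < 1 - (1 - ε) * α := by
    nlinarith [mul_nonneg hε.le hα0, mul_nonneg hε.le (sub_nonneg.2 hα1)]
  rw [div_mul_eq_mul_div, div_le_iff₀ hd]
  linarith

theorem nextShiftVolume_general (s : ℕ) (ε : ℝ) (hε0 : 0 < ε)
    (A B : Set (ZMod s)) (α : ℝ) (hα : α = (B.ncard : ℝ) / s) :
    ε * α / (1 - (1 - ε) * α) * s ≤
      ({x : ZMod s |
        (1 - ε) * α * (A.ncard : ℝ) ≤ ((((· + x) '' A) ∩ B).ncard : ℝ)}.ncard : ℝ) := by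
  rcases Nat.eq_zero_or_pos s with rfl | hs
  · simp
  have : NeZero s := ⟨hs.ne'⟩
  have hB : (B.ncard : ℝ) ≤ s := mod_cast B.ncard_le_card.trans_eq (Nat.card_zmod s)
  have hα0 : 0 ≤ α := hα ▸ by positivity
  have hα1 : α ≤ 1 := hα ▸ div_le_one_of_le₀ hB (Nat.cast_nonneg s)
  set good := {x : ZMod s | (1 - ε) * α * (A.ncard : ℝ) ≤ ((((· + x) '' A) ∩ B).ncard : ℝ)}
  refine div_mul_le_of_le_add_sub_mul hε0 hα0 hα1 ?_
  rcases A.ncard.eq_zero_or_pos with hA | hA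
  · have : good = Set.univ := Set.eq_univ_of_forall fun x => by simp [good, hA]
    simpa [this] using mul_le_of_le_one_left (Nat.cast_nonneg s) hα1
  have hsum := Fintype.sum_le_ncard_setOf_le_mul_add
    (fun x : ZMod s => ((((· + x) '' A) ∩ B).ncard : ℝ)) (M := A.ncard)
    (c := (1 - ε) * α * A.ncard)
    fun x => mod_cast (Set.ncard_inter_le_ncard_left _ _).trans Set.ncard_image_le
  rw [← Nat.cast_sum, Set.sum_ncard_image_add_right_inter, ZMod.card, Nat.cast_mul,
    show (B.ncard : ℝ) = α * s by rw [hα]; field_simp] at hsum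
  refine le_of_mul_le_mul_left ?_ (show (0 : ℝ) < A.ncard by exact_mod_cast hA)
  linarith

/-- For `0 < ε < 1` and `A, B ⊆ ZMod s` with `α = |B|/s`, the number of `x` with
`|(A + x) ∩ B| ≥ (1 - ε) * α * |A|` is at least `(ε * α / (1 - (1 - ε) * α)) * s`. -/
theorem nextShiftVolume (s : ℕ) (hs : 0 < s) (ε : ℝ) (hε0 : 0 < ε) (hε1 : ε < 1)
    (A B : Set (ZMod s)) (α : ℝ) (hα : α = (B.ncard : ℝ) / s) :
    ε * α / (1 - (1 - ε) * α) * s ≤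
      ({x : ZMod s |
        (1 - ε) * α * (A.ncard : ℝ) ≤ ((((· + x) '' A) ∩ B).ncard : ℝ)}.ncard : ℝ) :=
  nextShiftVolume_general s ε hε0 A B α hα
end

section
/- Let s be a positive integer, let 0 < ε < 1 be real, and let A, B ⊆ ZMod s with |B| ≥ s/2. Then the number of elements x ∈ ZMod s for which |(A + x) ∩ B| ≥ (1 − ε)·|A|/2 is at least (2ε/(1 + ε)) · (s/2). -/
open Finset

/-- For `0 < ε < 1` and `A, B ⊆ ZMod s` with `|B| ≥ s/2`, the number of `x` with
`|(A + x) ∩ B| ≥ (1 - ε) * |A| / 2` is at least `(2ε/(1+ε)) * (s/2)`. -/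
theorem nextShiftVolume_half (s : ℕ) (hs : 0 < s) (ε : ℝ) (hε0 : 0 < ε) (hε1 : ε < 1)
    (A B : Set (ZMod s)) (hB : (s : ℝ) / 2 ≤ (B.ncard : ℝ)) :
    2 * ε / (1 + ε) * ((s : ℝ) / 2) ≤
      ({x : ZMod s |
        (1 - ε) * (A.ncard : ℝ) / 2 ≤ ((((· + x) '' A) ∩ B).ncard : ℝ)}.ncard : ℝ) := by
  classical
  haveI : NeZero s := ⟨hs.ne'⟩
  set A' : Finset (ZMod s) := Finset.univ.filter (· ∈ A) with hA'
  set B' : Finset (ZMod s) := Finset.univ.filter (· ∈ B) with hB'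
  have hAcard : A.ncard = A'.card := by
    rw [hA', Set.filter_mem_univ_eq_toFinset, Set.ncard_eq_toFinset_card']
  have hBcard : B.ncard = B'.card := by
    rw [hB', Set.filter_mem_univ_eq_toFinset, Set.ncard_eq_toFinset_card']
  set g : ZMod s → ℕ := fun x => (B'.filter (fun b => b - x ∈ A')).card with hg
  have key : ∀ x : ZMod s, (((· + x) '' A) ∩ B).ncard = g x := by
    intro x
    have hset : ((· + x) '' A) ∩ B = ↑(B'.filter (fun b => b - x ∈ A')) := by
      ext b
      simp only [Set.mem_inter_iff, Set.mem_image, Finset.coe_filter, Set.mem_setOf_eq,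
        hA', hB', Finset.mem_filter, Finset.mem_univ, true_and]
      constructor
      · rintro ⟨⟨a, ha, rfl⟩, hb⟩
        simp [ha, hb]
      · rintro ⟨hb, ha⟩
        exact ⟨⟨b - x, ha, by ring⟩, hb⟩
    rw [hset, Set.ncard_coe_finset]
  have gleA : ∀ x : ZMod s, g x ≤ A'.card := by
    intro x
    apply Finset.card_le_card_of_injOn (fun b => b - x)
    · intro b hb
      exact (Finset.mem_filter.mp hb).2
    · intro a _ b _ h
      simpa using sub_left_injective h
  have sum_eq : ∑ x : ZMod s, g x = A'.card * B'.card := by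
    calc ∑ x : ZMod s, g x
        = ∑ x : ZMod s, ∑ b ∈ B', if b - x ∈ A' then 1 else 0 := by
          refine Finset.sum_congr rfl fun x _ => ?_
          simp only [hg]
          rw [Finset.card_filter]
      _ = ∑ b ∈ B', ∑ x : ZMod s, if b - x ∈ A' then 1 else 0 := Finset.sum_comm
      _ = ∑ b ∈ B', A'.card := by
          refine Finset.sum_congr rfl fun b _ => ?_
          rw [← Finset.card_filter]
          apply Finset.card_bij' (fun x _ => b - x) (fun a _ => b - a)
          · intro x hx; simpa using (Finset.mem_filter.mp hx).2
          · intro a ha; simp [ha]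
          · intro x hx; simp
          · intro a ha; simp
      _ = A'.card * B'.card := by rw [Finset.sum_const, smul_eq_mul, mul_comm]
  set G : Finset (ZMod s) :=
    Finset.univ.filter (fun x => (1 - ε) * (A.ncard : ℝ) / 2 ≤ ((g x : ℕ) : ℝ)) with hG
  have hTcard : ({x : ZMod s |
      (1 - ε) * (A.ncard : ℝ) / 2 ≤ ((((· + x) '' A) ∩ B).ncard : ℝ)}.ncard : ℝ)
      = (G.card : ℝ) := by
    congr 1
    rw [← Set.ncard_coe_finset G]
    congr 1
    ext x
    simp only [hG, Set.mem_setOf_eq, Finset.coe_filter, Finset.mem_univ, true_and, key x]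
  rw [hTcard]
  set T : ℝ := (G.card : ℝ) with hT
  have hTle : T ≤ (s : ℝ) := by
    rw [hT]
    exact_mod_cast (Finset.card_le_card (Finset.subset_univ G)).trans_eq (by simp [ZMod.card])
  by_cases hA0 : A'.card = 0
  · -- A empty: every x is in G
    have : G = Finset.univ := by
      rw [hG]
      apply Finset.filter_true_of_mem
      intro x _
      rw [hAcard, hA0]
      simp
    have hTs : T = (s : ℝ) := by rw [hT, this]; simp [ZMod.card]
    rw [hTs, div_mul_eq_mul_div, div_le_iff₀ (by linarith)]
    nlinarith [(Nat.cast_pos.mpr hs : (0:ℝ) < (s:ℝ))]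
  · have hApos : (0 : ℝ) < A'.card := by positivity
    -- main inequality via sums
    have sum_split : (A'.card : ℝ) * ((s : ℝ) / 2) ≤ T * A'.card + ((s : ℝ) - T) * ((1 - ε) * (A'.card : ℝ) / 2) := by
      have h1 : (A'.card : ℝ) * ((s : ℝ) / 2) ≤ ∑ x : ZMod s, (g x : ℝ) := by
        have : (∑ x : ZMod s, (g x : ℝ)) = (A'.card : ℝ) * (B'.card : ℝ) := by
          exact_mod_cast congrArg (Nat.cast : ℕ → ℝ) sum_eq
        rw [this]
        have : (s : ℝ) / 2 ≤ (B'.card : ℝ) := by rwa [hBcard] at hB; 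
        nlinarith
      have h2 : ∑ x : ZMod s, (g x : ℝ) ≤ T * A'.card + ((s : ℝ) - T) * ((1 - ε) * (A'.card : ℝ) / 2) := by
        rw [← Finset.sum_filter_add_sum_filter_not Finset.univ
          (fun x => (1 - ε) * (A.ncard : ℝ) / 2 ≤ ((g x : ℕ) : ℝ))]
        have e1 : ∑ x ∈ G, (g x : ℝ) ≤ T * A'.card := by
          calc ∑ x ∈ G, (g x : ℝ) ≤ ∑ x ∈ G, (A'.card : ℝ) := by
                apply Finset.sum_le_sum
                intro x _
                exact_mod_cast gleA x
            _ = T * A'.card := by rw [Finset.sum_const, hT]; ring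
        have e2 : ∑ x ∈ Finset.univ.filter (fun x => ¬ ((1 - ε) * (A.ncard : ℝ) / 2 ≤ ((g x : ℕ) : ℝ))), (g x : ℝ)
            ≤ ((s : ℝ) - T) * ((1 - ε) * (A'.card : ℝ) / 2) := by
          have hcc : ((Finset.univ.filter (fun x => ¬ ((1 - ε) * (A.ncard : ℝ) / 2 ≤ ((g x : ℕ) : ℝ)))).card : ℝ)
              = (s : ℝ) - T := by
            rw [Finset.filter_not, Finset.card_sdiff_of_subset (Finset.filter_subset _ _)]
            have hle : G.card ≤ (Finset.univ : Finset (ZMod s)).card :=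
              Finset.card_le_card (Finset.subset_univ G)
            rw [Nat.cast_sub hle]
            simp [hT, hG, ZMod.card]
          calc ∑ x ∈ Finset.univ.filter (fun x => ¬ ((1 - ε) * (A.ncard : ℝ) / 2 ≤ ((g x : ℕ) : ℝ))), (g x : ℝ)
              ≤ ∑ x ∈ Finset.univ.filter (fun x => ¬ ((1 - ε) * (A.ncard : ℝ) / 2 ≤ ((g x : ℕ) : ℝ))), ((1 - ε) * (A'.card : ℝ) / 2) := by
                apply Finset.sum_le_sum
                intro x hx
                have := (Finset.mem_filter.mp hx).2
                rw [hAcard] at this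
                linarith [lt_of_not_ge this]
            _ = ((s : ℝ) - T) * ((1 - ε) * (A'.card : ℝ) / 2) := by
                rw [Finset.sum_const, nsmul_eq_mul, hcc]
        exact add_le_add e1 e2
      linarith
    -- divide by |A|
    have hmain : (s : ℝ) / 2 ≤ T + ((s : ℝ) - T) * ((1 - ε) / 2) := by
      nlinarith [sum_split, hApos]
    rw [div_mul_eq_mul_div, div_le_iff₀ (by linarith)]
    nlinarith
end

section
/- Let t, s, k be positive integers with t dividing k and s ≥ (k/t)·2^t. Let c : Fin t → ZMod s → Bool be a coloring in which every row is dominated by red, i.e., |{y ∈ ZMod s : c i y = true}| ≥ s/2 for every i. Then there exists a shift sequence σ : Fin t → ZMod s such that the number of columns y ∈ ZMod s with c i (y + σ i) = true for all i ∈ Fin t is at least k/t. -/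
/-!
Average over all shift sequences. Column `y` is red under `σ` exactly when `y + σ i` lies in
the red set of row `i` for every `i`, so each column is red for `∏ i, rᵢ` of the `sᵗ` shift
sequences, where `rᵢ ≥ s / 2` is the number of red entries of row `i`. Hence some `σ`
has at least `s ∏ i, rᵢ / sᵗ ≥ s / 2ᵗ ≥ k / t` red columns.
-/

open Finset

section Shifts

variable {ι G : Type*} [Fintype ι] [DecidableEq ι] [AddGroup G] [Fintype G]

def redColumns (c : ι → G → Bool) (σ : ι → G) : Finset G :=
  {y | ∀ i, c i (y + σ i)}

theorem card_filter_add_left (p : G → Bool) (y : G) :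
    #{x | p (y + x)} = #{x | p x} := by
  simp only [card_filter]
  exact Fintype.sum_equiv (Equiv.addLeft y) _ _ fun _ => rfl

theorem card_filter_forall_add_eq_prod (c : ι → G → Bool) (y : G) :
    #{σ : ι → G | ∀ i, c i (y + σ i)} = ∏ i, #{x | c i x} := by
  have : ({σ : ι → G | ∀ i, c i (y + σ i)} : Finset _) =
      Fintype.piFinset fun i => {x | c i (y + x)} := by
    ext σ
    simp [Fintype.mem_piFinset]
  simp only [this, Fintype.card_piFinset, card_filter_add_left]

theorem sum_card_redColumns (c : ι → G → Bool) :
    ∑ σ : ι → G, #(redColumns c σ) = Fintype.card G * ∏ i, #{y | c i y} := by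
  simp only [redColumns, card_filter]
  rw [sum_comm]
  simp only [← card_filter, card_filter_forall_add_eq_prod, sum_const, card_univ, smul_eq_mul]

theorem exists_card_mul_prod_le_card_redColumns (c : ι → G → Bool) :
    ∃ σ : ι → G, Fintype.card G * ∏ i, #{y | c i y} ≤
      Fintype.card G ^ Fintype.card ι * #(redColumns c σ) := by
  obtain ⟨σ, -, hσ⟩ := exists_le_of_sum_le (univ_nonempty (α := ι → G))
    (f := fun _ => Fintype.card G * ∏ i, #{y | c i y})
    (g := fun σ => Fintype.card G ^ Fintype.card ι * #(redColumns c σ)) <| by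
      rw [sum_const, card_univ, Fintype.card_fun, smul_eq_mul, ← mul_sum, sum_card_redColumns]
  exact ⟨σ, hσ⟩

theorem exists_pow_mul_card_le_card_redColumns (c : ι → G → Bool) {α : ℝ} (hα : 0 ≤ α)
    (hred : ∀ i, α * Fintype.card G ≤ #{y | c i y}) :
    ∃ σ : ι → G, α ^ Fintype.card ι * Fintype.card G ≤ #(redColumns c σ) := by
  obtain ⟨σ, hσ⟩ := exists_card_mul_prod_le_card_redColumns c
  have hG : (0 : ℝ) < Fintype.card G := Nat.cast_pos.2 Fintype.card_pos
  refine ⟨σ, le_of_mul_le_mul_left ?_ (pow_pos hG (Fintype.card ι))⟩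
  have hprod : (α * Fintype.card G) ^ Fintype.card ι ≤ ∏ i, (#{y | c i y} : ℝ) :=
    calc (α * Fintype.card G) ^ Fintype.card ι = ∏ _i : ι, α * (Fintype.card G : ℝ) := by
          rw [prod_const, card_univ]
      _ ≤ _ := prod_le_prod (fun _ _ => by positivity) fun i _ => hred i
  calc (Fintype.card G : ℝ) ^ Fintype.card ι * (α ^ Fintype.card ι * Fintype.card G)
      = Fintype.card G * (α * Fintype.card G) ^ Fintype.card ι := by ring
    _ ≤ Fintype.card G * ∏ i, (#{y | c i y} : ℝ) := by gcongr
    _ ≤ Fintype.card G ^ Fintype.card ι * #(redColumns c σ) := by exact_mod_cast hσ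

end Shifts

theorem exists_good_shift_sequence_general (t s k : ℕ) (hs : 0 < s)
    (hst : (k : ℝ) / t * 2 ^ t ≤ (s : ℝ))
    (c : Fin t → ZMod s → Bool)
    (hdom : ∀ i, (s : ℝ) / 2 ≤ ({y : ZMod s | c i y = true}.ncard : ℝ)) :
    ∃ σ : Fin t → ZMod s,
      (k : ℝ) / t ≤ ({y : ZMod s | ∀ i, c i (y + σ i) = true}.ncard : ℝ) := by
  have : NeZero s := ⟨hs.ne'⟩
  obtain ⟨σ, hσ⟩ := exists_pow_mul_card_le_card_redColumns c (α := 1 / 2) (by norm_num)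
    fun i => by simpa [Set.ncard_eq_toFinset_card', ZMod.card, div_eq_inv_mul] using hdom i
  refine ⟨σ, ?_⟩
  simp only [Fintype.card_fin, ZMod.card] at hσ
  calc (k : ℝ) / t = (k / t * 2 ^ t) * (1 / 2) ^ t := by
        rw [mul_assoc, ← mul_pow]; norm_num
    _ ≤ (1 / 2) ^ t * s := by rw [mul_comm]; gcongr
    _ ≤ #(redColumns c σ) := hσ
    _ = _ := by rw [redColumns, ← Set.ncard_coe_finset]; simp

/-- If `t ∣ k`, `s ≥ (k/t) * 2^t` and every row of the coloring `c` of the `t × s` matrix is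
dominated by red (`true`), then some shift sequence `σ` yields at least `k/t` red columns. -/
theorem exists_good_shift_sequence (t s k : ℕ) (ht : 0 < t) (hs : 0 < s) (hk : 0 < k)
    (htk : t ∣ k) (hst : (k : ℝ) / t * 2 ^ t ≤ (s : ℝ))
    (c : Fin t → ZMod s → Bool)
    (hdom : ∀ i, (s : ℝ) / 2 ≤ ({y : ZMod s | c i y = true}.ncard : ℝ)) :
    ∃ σ : Fin t → ZMod s,
      (k : ℝ) / t ≤ ({y : ZMod s | ∀ i, c i (y + σ i) = true}.ncard : ℝ) :=
  exists_good_shift_sequence_general t s k hs hst c hdom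
end

section
/- Let t, s be positive integers, let 0 < ε < 1 be real, and let c : Fin t → ZMod s → Bool be a coloring in which every row has at least s/2 red entries. Then for every j with 1 ≤ j ≤ t, the number of shift sequences σ : Fin j → ZMod s that are ε-good for c is at least (ε·s/(1 + ε))^j. -/
open Finset
open scoped Classical

lemma ncard_setOf_eq {α : Type*} [Fintype α] (p : α → Prop) [DecidablePred p] :
    {x | p x}.ncard = (univ.filter p).card := by
  rw [Set.ncard_eq_toFinset_card']
  simp [Set.toFinset_setOf]

noncomputable def rowSet {t s : ℕ} [NeZero s] (c : Fin t → ZMod s → Bool) (i : Fin t) :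
    Finset (ZMod s) := univ.filter (fun y => c i y = true)

noncomputable def Aset {t s : ℕ} [NeZero s] (c : Fin t → ZMod s → Bool) {j : ℕ} (hjt : j ≤ t)
    (σ : Fin j → ZMod s) : Finset (ZMod s) :=
  univ.filter (fun y => ∀ i : Fin j, c (Fin.castLE hjt i) (y + σ i) = true)

lemma Aset_snoc {t s : ℕ} [NeZero s] (c : Fin t → ZMod s → Bool) {j : ℕ} (hjt' : j + 1 ≤ t)
    (σ : Fin j → ZMod s) (a : ZMod s) :
    Aset c hjt' (Fin.snoc σ a) =
      (Aset c (Nat.le_of_succ_le hjt') σ).filter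
        (fun y => c (Fin.castLE hjt' (Fin.last j)) (y + a) = true) := by
  ext y
  simp only [Aset, mem_filter, mem_univ, true_and, and_assoc]
  constructor
  · intro h
    refine ⟨fun i => ?_, ?_⟩
    · have := h i.castSucc
      simpa [Fin.snoc_castSucc, Fin.castLE] using this
    · have := h (Fin.last j)
      simpa [Fin.snoc_last] using this
  · rintro ⟨h1, h2⟩ i
    refine Fin.lastCases ?_ ?_ i
    · simpa [Fin.snoc_last] using h2
    · intro i0
      have := h1 i0
      simpa [Fin.snoc_castSucc, Fin.castLE] using this

noncomputable def GoodSet {t s : ℕ} [NeZero s] (c : Fin t → ZMod s → Bool) (ε : ℝ) {j : ℕ}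
    (hjt : j ≤ t) : Finset (Fin j → ZMod s) :=
  univ.filter (fun σ => (s : ℝ) * ((1 - ε) / 2) ^ j ≤ ((Aset c hjt σ).card : ℝ))

lemma row_shift_card {t s : ℕ} [NeZero s] (c : Fin t → ZMod s → Bool) (i : Fin t) (y : ZMod s) :
    (univ.filter (fun a : ZMod s => c i (y + a) = true)).card = (rowSet c i).card := by
  apply Finset.card_bij' (fun a _ => y + a) (fun b _ => b - y)
  · intro a ha; simp only [rowSet, mem_filter, mem_univ, true_and] at *; exact ha
  · intro b hb; simp only [rowSet, mem_filter, mem_univ, true_and] at *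
    simpa using hb
  · intro a _; ring
  · intro b _; ring

lemma step {t s : ℕ} [NeZero s] (hs : 0 < s) (ε : ℝ) (hε0 : 0 < ε) (hε1 : ε < 1)
    (c : Fin t → ZMod s → Bool)
    (hdom : ∀ i, (s : ℝ) / 2 ≤ ((rowSet c i).card : ℝ))
    {j : ℕ} (hjt' : j + 1 ≤ t) (σ : Fin j → ZMod s)
    (hσ : (s : ℝ) * ((1 - ε) / 2) ^ j ≤ ((Aset c (Nat.le_of_succ_le hjt') σ).card : ℝ)) :
    ε * s / (1 + ε) ≤
      ((univ.filter (fun a : ZMod s => Fin.snoc σ a ∈ GoodSet c ε hjt')).card : ℝ) := by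
  set hjt := Nat.le_of_succ_le hjt'
  set A := Aset c hjt σ with hA
  set r := Fin.castLE hjt' (Fin.last j) with hr
  set m : ℝ := (A.card : ℝ) with hm
  have hmpos : 0 < m := by
    have hs' : (0:ℝ) < (s:ℝ) := by exact_mod_cast hs
    have h2 : (0:ℝ) < (1 - ε) / 2 := by linarith
    have : (0:ℝ) < (s : ℝ) * ((1 - ε) / 2) ^ j := mul_pos hs' (pow_pos h2 j)
    linarith
  -- double counting
  have hsum : ∑ a : ZMod s, ((Aset c hjt' (Fin.snoc σ a)).card : ℝ)
      = ∑ y ∈ A, ((univ.filter (fun a : ZMod s => c r (y + a) = true)).card : ℝ) := by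
    push_cast
    rw [← Nat.cast_sum, ← Nat.cast_sum]
    congr 1
    simp only [Aset_snoc c hjt' σ, Finset.card_filter]
    rw [Finset.sum_comm]
  have hlow : m * ((s : ℝ) / 2) ≤ ∑ a : ZMod s, ((Aset c hjt' (Fin.snoc σ a)).card : ℝ) := by
    rw [hsum]
    calc m * ((s:ℝ)/2) = ∑ _y ∈ A, (s:ℝ)/2 := by rw [Finset.sum_const]; push_cast; ring
      _ ≤ _ := by
        apply Finset.sum_le_sum
        intro y _
        rw [row_shift_card]
        exact hdom r
  set G := univ.filter (fun a : ZMod s => Fin.snoc σ a ∈ GoodSet c ε hjt') with hG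
  set N : ℝ := (G.card : ℝ) with hN
  have hNs : N ≤ (s : ℝ) := by
    have := Finset.card_le_card (Finset.subset_univ G)
    have hcard : (Finset.univ : Finset (ZMod s)).card = s := by
      simp [ZMod.card]
    rw [hcard] at this
    rw [hN]
    exact_mod_cast this
  have hN0 : 0 ≤ N := by positivity
  have hcard_le : ∀ a : ZMod s, ((Aset c hjt' (Fin.snoc σ a)).card : ℝ) ≤ m := by
    intro a
    rw [Aset_snoc]
    exact_mod_cast Nat.cast_le.mpr (Finset.card_filter_le _ _)
  have hup : ∑ a : ZMod s, ((Aset c hjt' (Fin.snoc σ a)).card : ℝ)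
      ≤ N * m + ((s : ℝ) - N) * ((s : ℝ) * ((1 - ε) / 2) ^ (j + 1)) := by
    have hsplit : (Finset.univ : Finset (ZMod s)) = G ∪ Gᶜ := by simp
    rw [show ∑ a : ZMod s, ((Aset c hjt' (Fin.snoc σ a)).card : ℝ)
        = ∑ a ∈ G, ((Aset c hjt' (Fin.snoc σ a)).card : ℝ)
          + ∑ a ∈ Gᶜ, ((Aset c hjt' (Fin.snoc σ a)).card : ℝ) from
      (Finset.sum_add_sum_compl G _).symm]
    have h1 : ∑ a ∈ G, ((Aset c hjt' (Fin.snoc σ a)).card : ℝ) ≤ N * m := by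
      calc ∑ a ∈ G, ((Aset c hjt' (Fin.snoc σ a)).card : ℝ) ≤ ∑ _a ∈ G, m :=
            Finset.sum_le_sum (fun a _ => hcard_le a)
        _ = N * m := by rw [Finset.sum_const, nsmul_eq_mul]
    have h2 : ∑ a ∈ Gᶜ, ((Aset c hjt' (Fin.snoc σ a)).card : ℝ)
        ≤ ((s : ℝ) - N) * ((s : ℝ) * ((1 - ε) / 2) ^ (j + 1)) := by
      have hGc : (Gᶜ.card : ℝ) = (s : ℝ) - N := by
        rw [Finset.card_compl]
        have hcard : (Fintype.card (ZMod s) : ℝ) = (s:ℝ) := by simp [ZMod.card]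
        push_cast [Finset.card_le_univ G]
        rw [hcard]
      calc ∑ a ∈ Gᶜ, ((Aset c hjt' (Fin.snoc σ a)).card : ℝ)
          ≤ ∑ _a ∈ Gᶜ, ((s : ℝ) * ((1 - ε) / 2) ^ (j + 1)) := by
            apply Finset.sum_le_sum
            intro a ha
            simp only [hG, Finset.mem_compl, mem_filter, mem_univ, true_and] at ha
            simp only [GoodSet, mem_filter, mem_univ, true_and, not_le] at ha
            exact le_of_lt ha
        _ = ((s : ℝ) - N) * ((s : ℝ) * ((1 - ε) / 2) ^ (j + 1)) := by
            rw [Finset.sum_const, nsmul_eq_mul, hGc]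
    linarith
  -- threshold bound
  have hthr : (s : ℝ) * ((1 - ε) / 2) ^ (j + 1) ≤ ((1 - ε) / 2) * m := by
    have : (s : ℝ) * ((1 - ε) / 2) ^ (j + 1) = ((1 - ε) / 2) * ((s:ℝ) * ((1 - ε) / 2) ^ j) := by
      ring
    rw [this]
    apply mul_le_mul_of_nonneg_left hσ
    linarith
  have hkey : m * ((s : ℝ) / 2) ≤ N * m + ((s : ℝ) - N) * (((1 - ε) / 2) * m) := by
    have hsN : 0 ≤ (s : ℝ) - N := by linarith
    nlinarith [mul_le_mul_of_nonneg_left hthr hsN]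
  -- divide by m
  have hdiv : (s : ℝ) / 2 ≤ N + ((s : ℝ) - N) * ((1 - ε) / 2) := by
    have h2 : (s : ℝ) / 2 * m ≤ (N + ((s : ℝ) - N) * ((1 - ε) / 2)) * m := by nlinarith
    exact le_of_mul_le_mul_right h2 hmpos
  rw [div_le_iff₀ (by linarith : (0:ℝ) < 1 + ε)]
  nlinarith

lemma main_count {t s : ℕ} [NeZero s] (hs : 0 < s) (ε : ℝ) (hε0 : 0 < ε) (hε1 : ε < 1)
    (c : Fin t → ZMod s → Bool)
    (hdom : ∀ i, (s : ℝ) / 2 ≤ ((rowSet c i).card : ℝ))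
    (j : ℕ) (hjt : j ≤ t) :
    (ε * s / (1 + ε)) ^ j ≤ ((GoodSet c ε hjt).card : ℝ) := by
  induction j with
  | zero =>
    rw [pow_zero]
    have hG : GoodSet c ε hjt = (univ : Finset (Fin 0 → ZMod s)) := by
      apply Finset.eq_univ_iff_forall.mpr
      intro σ
      simp only [GoodSet, mem_filter, mem_univ, true_and, pow_zero, mul_one]
      have : Aset c hjt σ = univ := by
        apply Finset.eq_univ_iff_forall.mpr
        intro y
        simp only [Aset, mem_filter, mem_univ, true_and]
        exact fun i => absurd i.2 (by omega)
      rw [this]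
      simp [ZMod.card]
    rw [hG]
    simp
  | succ j ih =>
    have hjt0 : j ≤ t := Nat.le_of_succ_le hjt
    have ihj := ih hjt0
    set x : ℝ := ε * s / (1 + ε) with hx
    have hx0 : 0 ≤ x := by
      have : (0:ℝ) ≤ (s:ℝ) := by positivity
      rw [hx]; positivity
    set S := (GoodSet c ε hjt).filter (fun σ' => (Fin.init σ' : Fin j → ZMod s) ∈ GoodSet c ε hjt0) with hS
    have hfib : S.card = ∑ σ ∈ GoodSet c ε hjt0,
        (S.filter (fun σ' => Fin.init σ' = σ)).card := by
      apply Finset.card_eq_sum_card_fiberwise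
      intro σ' hσ'
      exact (Finset.mem_filter.mp hσ').2
    have hfiblow : ∀ σ ∈ GoodSet c ε hjt0,
        x ≤ ((S.filter (fun σ' => Fin.init σ' = σ)).card : ℝ) := by
      intro σ hσmem
      have hσ : (s : ℝ) * ((1 - ε) / 2) ^ j ≤ ((Aset c (Nat.le_of_succ_le hjt) σ).card : ℝ) :=
        (Finset.mem_filter.mp hσmem).2
      have hstep := step hs ε hε0 hε1 c hdom hjt σ hσ
      refine le_trans hstep ?_
      have hle : (univ.filter (fun a : ZMod s => Fin.snoc σ a ∈ GoodSet c ε hjt)).card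
          ≤ (S.filter (fun σ' => Fin.init σ' = σ)).card := by
        apply Finset.card_le_card_of_injOn (fun a => (Fin.snoc σ a : Fin (j+1) → ZMod s))
        · intro a ha
          have hmem := (Finset.mem_filter.mp ha).2
          have heq : (Fin.init (Fin.snoc σ a : Fin (j+1) → ZMod s) : Fin j → ZMod s) = σ := by
            funext i0; simp [Fin.init]
          refine Finset.mem_filter.mpr ⟨Finset.mem_filter.mpr ⟨hmem, ?_⟩, ?_⟩
          · rw [heq]; exact hσmem
          · exact heq
        · intro a _ b _ hab
          have := congrFun hab (Fin.last j)
          simpa [Fin.snoc_last] using this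
      exact_mod_cast hle
    have hsum : (GoodSet c ε hjt0).card * x ≤ (S.card : ℝ) := by
      rw [hfib]
      push_cast
      calc ((GoodSet c ε hjt0).card : ℝ) * x = ∑ _σ ∈ GoodSet c ε hjt0, x := by
            rw [Finset.sum_const, nsmul_eq_mul]
        _ ≤ _ := Finset.sum_le_sum hfiblow
    have hSle : (S.card : ℝ) ≤ ((GoodSet c ε hjt).card : ℝ) := by
      exact_mod_cast Finset.card_le_card (Finset.filter_subset _ _)
    calc x ^ (j + 1) = x ^ j * x := by ring
      _ ≤ ((GoodSet c ε hjt0).card : ℝ) * x := mul_le_mul_of_nonneg_right ihj hx0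
      _ ≤ (S.card : ℝ) := hsum
      _ ≤ _ := hSle




/-- If every row of the coloring `c` has at least `s/2` red entries, then for every
`1 ≤ j ≤ t` the number of `ε`-good shift sequences of length `j` is at least
`(ε * s / (1 + ε)) ^ j`. -/
theorem count_epsilon_good_sequences (t s : ℕ) (ht : 0 < t) (hs : 0 < s)
    (ε : ℝ) (hε0 : 0 < ε) (hε1 : ε < 1)
    (c : Fin t → ZMod s → Bool)
    (hdom : ∀ i, (s : ℝ) / 2 ≤ ({y : ZMod s | c i y = true}.ncard : ℝ))
    (j : ℕ) (hj1 : 1 ≤ j) (hjt : j ≤ t) :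
    (ε * s / (1 + ε)) ^ j ≤
      ({σ : Fin j → ZMod s |
        (s : ℝ) * ((1 - ε) / 2) ^ j ≤
          ({y : ZMod s |
            ∀ i : Fin j, c (Fin.castLE hjt i) (y + σ i) = true}.ncard : ℝ)}.ncard : ℝ) := by
  haveI : NeZero s := ⟨hs.ne'⟩
  have hdom' : ∀ i, (s : ℝ) / 2 ≤ ((rowSet c i).card : ℝ) := by
    intro i
    have := hdom i
    rwa [show {y : ZMod s | c i y = true}.ncard = (rowSet c i).card from by
      rw [rowSet]; exact ncard_setOf_eq _] at this
  have hA : ∀ σ : Fin j → ZMod s,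
      ({y : ZMod s | ∀ i : Fin j, c (Fin.castLE hjt i) (y + σ i) = true}.ncard)
        = (Aset c hjt σ).card := by
    intro σ
    rw [Aset]
    exact ncard_setOf_eq _
  have hgoal : ({σ : Fin j → ZMod s |
      (s : ℝ) * ((1 - ε) / 2) ^ j ≤
        ({y : ZMod s |
          ∀ i : Fin j, c (Fin.castLE hjt i) (y + σ i) = true}.ncard : ℝ)}.ncard)
      = (GoodSet c ε hjt).card := by
    simp only [hA]
    rw [GoodSet]
    exact ncard_setOf_eq _
  rw [hgoal]
  exact main_count hs ε hε0 hε1 c hdom' j hjt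
end

section
/- There exists a constant C > 0 such that for all positive integers m, d and every real 0 < V ≤ 1, there exists a set S of functions Fin d → Fin m with |S| ≤ m · 2^(C·(d + log₂(1/V))) such that S intersects every combinatorial rectangle in (Fin m)^d of volume at least V. -/
/-!
Choose `t` points of `(Fin m)^d` independently and uniformly at random. A fixed rectangle of
volume at least `V` is missed by all of them with probability at most `(1 - V)^t ≤ exp (-V t)`,
and there are at most `2^(m d)` rectangles, so for `t > m d / V` the union bound leaves a
positive probability that every such rectangle is hit. The size `t ≈ m d / V` is at most
`m 2^d / V = m 2^(d + log₂ (1/V))`.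
-/

open Finset Real

theorem exists_hitting_finset_of_card_mul_pow_lt {α : Type*} [Fintype α] [DecidableEq α]
    [Nonempty α] (𝓕 : Finset (Finset α)) {V : ℝ}
    (hV : ∀ A ∈ 𝓕, V * Fintype.card α ≤ #A) {t : ℕ} (h𝓕 : #𝓕 * (1 - V) ^ t < 1) :
    ∃ S : Finset α, #S ≤ t ∧ ∀ A ∈ 𝓕, ∃ a ∈ S, a ∈ A := by
  set missing := 𝓕.biUnion fun A ↦ Fintype.piFinset fun _ : Fin t ↦ Aᶜ
  have hcompl : ∀ A ∈ 𝓕, (#Aᶜ : ℝ) ≤ (1 - V) * Fintype.card α := by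
    intro A hA
    have hsum := congrArg (Nat.cast (R := ℝ)) A.card_compl_add_card
    push_cast at hsum
    linarith [hV A hA]
  have hα : (0 : ℝ) < Fintype.card α := by exact_mod_cast Fintype.card_pos
  have hmissing : #missing < #(univ : Finset (Fin t → α)) := by
    suffices (#missing : ℝ) < (Fintype.card α : ℝ) ^ t by
      simpa [← Nat.cast_lt (α := ℝ)] using this
    calc (#missing : ℝ) ≤ ∑ A ∈ 𝓕, (#Aᶜ : ℝ) ^ t := by
          exact_mod_cast card_biUnion_le.trans_eq (by simp)
      _ ≤ ∑ A ∈ 𝓕, ((1 - V) * Fintype.card α) ^ t :=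
          sum_le_sum fun A hA ↦ pow_le_pow_left₀ (Nat.cast_nonneg _) (hcompl A hA) t
      _ = #𝓕 * (1 - V) ^ t * (Fintype.card α : ℝ) ^ t := by
          rw [sum_const, nsmul_eq_mul, mul_pow, mul_assoc]
      _ < (Fintype.card α : ℝ) ^ t := by
          simpa using mul_lt_mul_of_pos_right h𝓕 (pow_pos hα t)
  obtain ⟨g, -, hg⟩ := exists_mem_notMem_of_card_lt_card hmissing
  refine ⟨univ.image g, card_image_le.trans (by simp), fun A hA ↦ ?_⟩
  simp only [missing, mem_biUnion, Fintype.mem_piFinset, mem_compl, not_exists, not_and,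
    not_forall, not_not] at hg
  obtain ⟨j, hj⟩ := hg A hA
  exact ⟨g j, mem_image_of_mem g (mem_univ j), hj⟩

theorem mul_one_sub_pow_lt_one {N V : ℝ} {t : ℕ} (hN₀ : 0 ≤ N) (hV : V ≤ 1)
    (hN : N < exp (V * t)) : N * (1 - V) ^ t < 1 := by
  have hpow : (1 - V) ^ t ≤ exp (-(V * t)) := by
    calc (1 - V) ^ t ≤ exp (-V) ^ t :=
          pow_le_pow_left₀ (by linarith) (by linarith [add_one_le_exp (-V)]) t
      _ = exp (-(V * t)) := by rw [← exp_nat_mul]; ring_nf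
  calc N * (1 - V) ^ t ≤ N * exp (-(V * t)) := mul_le_mul_of_nonneg_left hpow hN₀
    _ < exp (V * t) * exp (-(V * t)) := mul_lt_mul_of_pos_right hN (exp_pos _)
    _ = 1 := by rw [← exp_add, add_neg_cancel, exp_zero]

theorem two_pow_le_exp (n : ℕ) : (2 : ℝ) ^ n ≤ exp n := by
  rw [← exp_one_pow]
  exact pow_le_pow_left₀ zero_le_two (by linarith [add_one_le_exp 1]) n

theorem le_card_piFinset_of_le_volume {m d : ℕ} {V : ℝ} {R : Fin d → Finset (Fin m)}
    (hR : V ≤ (∏ i, ((R i).card : ℝ)) / (m : ℝ) ^ d) (hm : 0 < m) :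
    V * Fintype.card (Fin d → Fin m) ≤ #(Fintype.piFinset R) := by
  rw [le_div_iff₀ (by positivity)] at hR
  simpa using hR

theorem rpow_nat_add_logb_one_div {V : ℝ} (hV : 0 < V) (d : ℕ) :
    (2 : ℝ) ^ ((d : ℝ) + logb 2 (1 / V)) = 2 ^ d / V := by
  rw [rpow_add two_pos, rpow_natCast, rpow_logb two_pos (by norm_num) (by positivity), mul_one_div]

theorem natFloor_mul_div_add_one_le {m V : ℝ} (hm : 1 ≤ m) (hV : 0 < V) (hV1 : V ≤ 1)
    (d : ℕ) :
    (⌊m * d / V⌋₊ + 1 : ℝ) ≤ m * (2 ^ d / V) := by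
  have hd : (d + 1 : ℝ) ≤ 2 ^ d := by exact_mod_cast Nat.lt_two_pow_self
  calc (⌊m * d / V⌋₊ + 1 : ℝ) ≤ m * d / V + 1 := by
        gcongr; exact Nat.floor_le (by positivity)
    _ ≤ m * d / V + m / V := by gcongr; rw [le_div_iff₀ hV]; nlinarith
    _ = m * (d + 1) / V := by ring
    _ ≤ m * (2 ^ d / V) := by rw [mul_div_assoc]; gcongr

/-- There is a constant `C > 0` such that for all positive `m, d` and every `0 < V ≤ 1`
there is a set `S` of functions `Fin d → Fin m` with `|S| ≤ m * 2 ^ (C * (d + log₂ (1/V)))`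
hitting every combinatorial rectangle in `(Fin m)^d` of volume at least `V`. -/
theorem exists_small_rectangle_hitting_set :
    ∃ C : ℝ, 0 < C ∧ ∀ m d : ℕ, 0 < m → 0 < d → ∀ V : ℝ, 0 < V → V ≤ 1 →
      ∃ S : Finset (Fin d → Fin m),
        (S.card : ℝ) ≤ (m : ℝ) * (2 : ℝ) ^ (C * ((d : ℝ) + Real.logb 2 (1 / V))) ∧
        ∀ R : Fin d → Finset (Fin m),
          V ≤ (∏ i, ((R i).card : ℝ)) / (m : ℝ) ^ d →
          ∃ f ∈ S, ∀ i, f i ∈ R i := by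
  refine ⟨1, one_pos, fun m d hm _ V hV hV1 ↦ ?_⟩
  have : NeZero m := ⟨hm.ne'⟩
  set rectangles := (univ : Finset (Fin d → Finset (Fin m))).filter
    fun R ↦ V ≤ (∏ i, ((R i).card : ℝ)) / (m : ℝ) ^ d
  set t := ⌊(m : ℝ) * d / V⌋₊ + 1
  have ht : (m : ℝ) * d / V < t := by simpa [t] using Nat.lt_floor_add_one ((m : ℝ) * d / V)
  have hcount : (#(rectangles.image Fintype.piFinset) : ℝ) < exp (V * t) :=
    calc (#(rectangles.image Fintype.piFinset) : ℝ)
          ≤ Fintype.card (Fin d → Finset (Fin m)) := by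
          exact_mod_cast card_image_le.trans (card_le_univ _)
      _ = (2 : ℝ) ^ (m * d) := by simp [pow_mul]
      _ ≤ exp (m * d) := by exact_mod_cast two_pow_le_exp (m * d)
      _ < exp (V * t) := exp_lt_exp.2 (by rwa [div_lt_iff₀' hV] at ht)
  obtain ⟨S, hSt, hS⟩ := exists_hitting_finset_of_card_mul_pow_lt
    (rectangles.image Fintype.piFinset) (V := V)
    (by simpa [rectangles] using fun R hR ↦ le_card_piFinset_of_le_volume hR hm)
    (mul_one_sub_pow_lt_one (Nat.cast_nonneg _) hV1 hcount)
  refine ⟨S, ?_, fun R hR ↦ ?_⟩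
  · rw [one_mul, rpow_nat_add_logb_one_div hV]
    calc (#S : ℝ) ≤ t := by exact_mod_cast hSt
      _ ≤ m * (2 ^ d / V) := by
          simpa [t] using natFloor_mul_div_add_one_le (by exact_mod_cast hm) hV hV1 d
  · obtain ⟨f, hfS, hf⟩ := hS _ (mem_image_of_mem _ (mem_filter.2 ⟨mem_univ _, hR⟩))
    exact ⟨f, hfS, Fintype.mem_piFinset.1 hf⟩
end

section
/- Let s, d be positive integers, let 0 < ε < 1 and 0 < a, b ≤ 1 be reals, and let A, B : Fin d → Set (ZMod s) be families of subsets with |A i| ≥ a·s and |B i| ≥ b·s for every i. Then the set E = {x : Fin d → ZMod s | ∀ i, |A i ∩ (B i + x i)| ≥ (1 − ε)·a·b·s} is a product set, i.e., E = {x | ∀ i, x i ∈ R i} where R i = {z ∈ ZMod s : |A i ∩ (B i + z)| ≥ (1 − ε)·a·b·s}, and moreover |R i| ≥ ε·b·s for every i; consequently |E| ≥ (ε·b·s)^d. -/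
open Finset

theorem count_aux (s : ℕ) [NeZero s] (Af Bf : Finset (ZMod s)) :
    ∑ z : ZMod s, (Af ∩ Bf.image (· + z)).card = Af.card * Bf.card := by
  classical
  have h1 : ∀ z : ZMod s, Af ∩ Bf.image (· + z) = Af.filter (fun v => v - z ∈ Bf) := by
    intro z
    ext v
    simp only [mem_inter, mem_image, mem_filter]
    constructor
    · rintro ⟨hv, w, hw, rfl⟩; refine ⟨hv, by simpa using hw⟩
    · rintro ⟨hv, hw⟩; exact ⟨hv, v - z, hw, by ring⟩
  simp only [h1, card_filter]
  rw [Finset.sum_comm]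
  have h2 : ∀ v : ZMod s, (∑ z : ZMod s, if v - z ∈ Bf then 1 else 0) = Bf.card := by
    intro v
    rw [← card_filter]
    apply Finset.card_bij (fun z _ => v - z)
    · intro z hz; simpa using (mem_filter.mp hz).2
    · intro x hx y hy h; have : v - (v - x) = v - (v - y) := by rw [h]
      simpa using this
    · intro w hw; exact ⟨v - w, by simp [hw], by ring⟩
  simp [h2, mul_comm]

theorem Rbound (s : ℕ) [NeZero s] (ε a b : ℝ) (hε0 : 0 < ε) (hε1 : ε < 1)
    (ha0 : 0 < a) (ha1 : a ≤ 1) (hb0 : 0 < b) (hb1 : b ≤ 1)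
    (Af Bf : Finset (ZMod s))
    (hA : a * s ≤ (Af.card : ℝ)) (hB : b * s ≤ (Bf.card : ℝ)) :
    ε * b * s ≤
      (((Finset.univ.filter (fun z : ZMod s =>
        (1 - ε) * a * b * s ≤ ((Af ∩ Bf.image (· + z)).card : ℝ))).card : ℝ)) := by
  classical
  set T : ℝ := (1 - ε) * a * b * s with hT
  set R := Finset.univ.filter (fun z : ZMod s =>
      T ≤ ((Af ∩ Bf.image (· + z)).card : ℝ)) with hR
  have hsum : (Af.card : ℝ) * Bf.card = ∑ z : ZMod s, ((Af ∩ Bf.image (· + z)).card : ℝ) := by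
    rw [← Nat.cast_sum, count_aux]; push_cast; ring
  have hcards : (Fintype.card (ZMod s) : ℝ) = s := by rw [ZMod.card]
  have hub : ∀ z : ZMod s, ((Af ∩ Bf.image (· + z)).card : ℝ) ≤ Af.card := by
    intro z; exact_mod_cast Finset.card_le_card (Finset.inter_subset_left)
  have hsplit : ∑ z : ZMod s, ((Af ∩ Bf.image (· + z)).card : ℝ)
      ≤ ∑ z ∈ R, (Af.card : ℝ) + ∑ z ∈ Rᶜ, T := by
    rw [← Finset.sum_add_sum_compl R]
    gcongr with z hz z hz
    · exact Finset.inter_subset_left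
    · simp only [hR, Finset.mem_compl, Finset.mem_filter, Finset.mem_univ, true_and,
        not_le] at hz
      exact hz.le
  have hRcard : (Rᶜ.card : ℝ) = s - R.card := by
    rw [Finset.card_compl]
    have : R.card ≤ Fintype.card (ZMod s) := Finset.card_le_univ R
    push_cast [Nat.cast_sub this]
    rw [hcards]
  have hkey : (Af.card : ℝ) * Bf.card ≤ R.card * Af.card + (s - R.card) * T := by
    calc (Af.card : ℝ) * Bf.card ≤ ∑ z ∈ R, (Af.card : ℝ) + ∑ z ∈ Rᶜ, T := by
          rw [hsum]; exact hsplit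
      _ = R.card * Af.card + (s - R.card) * T := by
          rw [Finset.sum_const, Finset.sum_const, nsmul_eq_mul, nsmul_eq_mul, hRcard]
  have hs0 : (0:ℝ) < s := by
    have := Fintype.card_pos (α := ZMod s)
    have : (0:ℝ) < Fintype.card (ZMod s) := by exact_mod_cast this
    linarith [hcards ▸ this]
  -- final algebra
  set α : ℝ := (Af.card : ℝ)
  set β : ℝ := (Bf.card : ℝ)
  set r : ℝ := (R.card : ℝ)
  rw [hT] at hkey
  have h1 : (0:ℝ) < α - (1-ε)*a*b*s := by
    nlinarith [mul_pos ha0 hs0, mul_pos (mul_pos ha0 hb0) hs0]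
  have h2a : (0:ℝ) ≤ (α - a*s) * (β - ε*b*s) := by
    apply mul_nonneg (sub_nonneg.mpr hA)
    nlinarith [mul_pos hb0 hs0]
  have h2b : (0:ℝ) ≤ a*s * (β - b*s) := by
    apply mul_nonneg (mul_nonneg ha0.le hs0.le) (sub_nonneg.mpr hB)
  have h2 : ε*b*s*(α - (1-ε)*a*b*s) ≤ α*β - s*((1-ε)*a*b*s) := by
    nlinarith [h2a, h2b, mul_pos (mul_pos (mul_pos hε0 hb0) hs0)
      (mul_pos (mul_pos (mul_pos (sub_pos.mpr hε1) ha0) hb0) hs0)]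
  have h3 : ε*b*s*(α - (1-ε)*a*b*s) ≤ r*(α - (1-ε)*a*b*s) := by nlinarith [hkey, h2]
  exact le_of_mul_le_mul_right h3 h1

/-- The set of `ε`-good level extensions forms a combinatorial rectangle of large volume:
if `|A i| ≥ a * s` and `|B i| ≥ b * s` for all `i`, then the set
`E = {x | ∀ i, |A i ∩ (B i + x i)| ≥ (1-ε) * a * b * s}` is a product of sets `R i` each of
cardinality at least `ε * b * s`, and hence `|E| ≥ (ε * b * s) ^ d`. -/
theorem good_extensions_rectangle (s d : ℕ) (hs : 0 < s) (hd : 0 < d)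
    (ε a b : ℝ) (hε0 : 0 < ε) (hε1 : ε < 1)
    (ha0 : 0 < a) (ha1 : a ≤ 1) (hb0 : 0 < b) (hb1 : b ≤ 1)
    (A B : Fin d → Set (ZMod s))
    (hA : ∀ i, a * s ≤ ((A i).ncard : ℝ))
    (hB : ∀ i, b * s ≤ ((B i).ncard : ℝ)) :
    ({x : Fin d → ZMod s |
        ∀ i, (1 - ε) * a * b * s ≤ (((A i) ∩ ((· + x i) '' (B i))).ncard : ℝ)} =
      {x : Fin d → ZMod s |
        ∀ i, x i ∈ {z : ZMod s |
          (1 - ε) * a * b * s ≤ (((A i) ∩ ((· + z) '' (B i))).ncard : ℝ)}}) ∧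
    (∀ i, ε * b * s ≤
      ({z : ZMod s |
        (1 - ε) * a * b * s ≤ (((A i) ∩ ((· + z) '' (B i))).ncard : ℝ)}.ncard : ℝ)) ∧
    (ε * b * s) ^ d ≤
      ({x : Fin d → ZMod s |
        ∀ i, (1 - ε) * a * b * s ≤
          (((A i) ∩ ((· + x i) '' (B i))).ncard : ℝ)}.ncard : ℝ) := by
  classical
  haveI : NeZero s := ⟨hs.ne'⟩
  set Af : Fin d → Finset (ZMod s) := fun i => (A i).toFinite.toFinset with hAf
  set Bf : Fin d → Finset (ZMod s) := fun i => (B i).toFinite.toFinset with hBf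
  have hcAf : ∀ i, ((A i).ncard : ℝ) = ((Af i).card : ℝ) := fun i => by
    rw [Set.ncard_eq_toFinset_card (A i) (A i).toFinite]
  have hcBf : ∀ i, ((B i).ncard : ℝ) = ((Bf i).card : ℝ) := fun i => by
    rw [Set.ncard_eq_toFinset_card (B i) (B i).toFinite]
  have hnc : ∀ i (z : ZMod s), ((A i ∩ (· + z) '' (B i)).ncard : ℝ)
      = (((Af i) ∩ (Bf i).image (· + z)).card : ℝ) := by
    intro i z
    have : A i ∩ (· + z) '' (B i) = ↑((Af i) ∩ (Bf i).image (· + z)) := by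
      simp only [hAf, hBf, Finset.coe_inter, Finset.coe_image, Set.Finite.coe_toFinset]
    rw [this, Set.ncard_coe_finset]
  set Rf : Fin d → Finset (ZMod s) := fun i => Finset.univ.filter (fun z : ZMod s =>
      (1 - ε) * a * b * s ≤ (((Af i) ∩ (Bf i).image (· + z)).card : ℝ)) with hRf
  have hRset : ∀ i, {z : ZMod s |
      (1 - ε) * a * b * s ≤ (((A i) ∩ ((· + z) '' (B i))).ncard : ℝ)} = ↑(Rf i) := by
    intro i
    ext z
    rw [Set.mem_setOf_eq, hnc i z]
    simp [hRf]
  refine ⟨rfl, ?_, ?_⟩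
  · intro i
    rw [hRset i, Set.ncard_coe_finset]
    exact Rbound s ε a b hε0 hε1 ha0 ha1 hb0 hb1 (Af i) (Bf i)
      (by rw [← hcAf]; exact hA i) (by rw [← hcBf]; exact hB i)
  · have hE : {x : Fin d → ZMod s |
        ∀ i, (1 - ε) * a * b * s ≤ (((A i) ∩ ((· + x i) '' (B i))).ncard : ℝ)}
        = ↑(Fintype.piFinset Rf) := by
      ext x
      simp only [Set.mem_setOf_eq, Finset.coe_sort_coe, Finset.mem_coe,
        Fintype.mem_piFinset, hRf, Finset.mem_filter, Finset.mem_univ, true_and]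
      constructor
      · intro h i; rw [← hnc i (x i)]; exact h i
      · intro h i; rw [hnc i (x i)]; exact h i
    rw [hE, Set.ncard_coe_finset, Fintype.card_piFinset]
    have hterm : ∀ i, ε * b * s ≤ ((Rf i).card : ℝ) := by
      intro i
      exact Rbound s ε a b hε0 hε1 ha0 ha1 hb0 hb1 (Af i) (Bf i)
        (by rw [← hcAf]; exact hA i) (by rw [← hcBf]; exact hB i)
    calc (ε * b * s) ^ d = ∏ _i : Fin d, (ε * b * s) := by
          rw [Finset.prod_const, Finset.card_univ, Fintype.card_fin]
      _ ≤ ∏ i : Fin d, ((Rf i).card : ℝ) := by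
          apply Finset.prod_le_prod
          · intro i _
            positivity
          · intro i _; exact hterm i
      _ = ((∏ i : Fin d, (Rf i).card : ℕ) : ℝ) := by push_cast; rfl
end

section
/- Let Ω be a nonempty finite set, let 0 < p ≤ 1 be real, let F be a finite family of subsets of Ω each of cardinality at least p·|Ω|, and let m be a positive integer with |F|·(1 − p)^m < 1. Then there exists a subset S ⊆ Ω with |S| ≤ m such that S intersects every member of F. -/
/-!
Union bound, phrased as counting: a tuple of `m` points of `Ω` misses a set `f` only if all its
entries lie in `fᶜ`, so at most `∑ f ∈ F, |fᶜ| ^ m ≤ |F| ((1 - p) |Ω|) ^ m < |Ω| ^ m` tuples miss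
some member of `F`. Some tuple therefore meets every member, and its range is the hitting set.
-/

open Finset

section HittingSet

variable {Ω : Type*} [Fintype Ω] [DecidableEq Ω]

theorem exists_tuple_hitting_of_sum_card_compl_pow_lt (F : Finset (Finset Ω)) (m : ℕ)
    (h : ∑ f ∈ F, #fᶜ ^ m < Fintype.card Ω ^ m) :
    ∃ g : Fin m → Ω, ∀ f ∈ F, ∃ i, g i ∈ f := by
  set missing := F.biUnion fun f => Fintype.piFinset fun _ : Fin m => fᶜ
  have hcard : #missing < #(univ : Finset (Fin m → Ω)) :=
    calc #missing ≤ ∑ f ∈ F, #(Fintype.piFinset fun _ : Fin m => fᶜ) := card_biUnion_le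
      _ = ∑ f ∈ F, #fᶜ ^ m := by simp only [Fintype.card_piFinset, prod_const, card_univ,
          Fintype.card_fin]
      _ < #(univ : Finset (Fin m → Ω)) := by simpa [Fintype.card_fun] using h
  obtain ⟨g, -, hg⟩ := exists_mem_notMem_of_card_lt_card hcard
  simp only [missing, mem_biUnion, Fintype.mem_piFinset, mem_compl, not_exists, not_and,
    not_forall, not_not] at hg
  exact ⟨g, hg⟩

theorem exists_hitting_set_of_sum_card_compl_pow_lt (F : Finset (Finset Ω)) (m : ℕ)
    (h : ∑ f ∈ F, #fᶜ ^ m < Fintype.card Ω ^ m) :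
    ∃ S : Finset Ω, #S ≤ m ∧ ∀ f ∈ F, ∃ x ∈ S, x ∈ f := by
  obtain ⟨g, hg⟩ := exists_tuple_hitting_of_sum_card_compl_pow_lt F m h
  refine ⟨univ.image g, card_image_le.trans_eq (card_fin m), fun f hf => ?_⟩
  obtain ⟨i, hi⟩ := hg f hf
  exact ⟨g i, mem_image_of_mem g (mem_univ i), hi⟩

theorem card_compl_le_of_mul_card_le {p : ℝ} {f : Finset Ω}
    (hf : p * Fintype.card Ω ≤ #f) : (#fᶜ : ℝ) ≤ (1 - p) * Fintype.card Ω := by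
  rw [card_compl, Nat.cast_sub (card_le_univ f)]
  linarith

end HittingSet

theorem exists_small_hitting_set_general (Ω : Type*) [Fintype Ω] [Nonempty Ω]
    (p : ℝ)
    (F : Finset (Finset Ω))
    (hF : ∀ f ∈ F, p * (Fintype.card Ω : ℝ) ≤ (f.card : ℝ))
    (m : ℕ)
    (hbound : (F.card : ℝ) * (1 - p) ^ m < 1) :
    ∃ S : Finset Ω, S.card ≤ m ∧ ∀ f ∈ F, ∃ x ∈ S, x ∈ f := by
  classical
  apply exists_hitting_set_of_sum_card_compl_pow_lt
  have hn : (0 : ℝ) < (Fintype.card Ω : ℝ) ^ m := by positivity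
  have hsum : ((∑ f ∈ F, #fᶜ ^ m : ℕ) : ℝ) < (Fintype.card Ω : ℝ) ^ m :=
    calc ((∑ f ∈ F, #fᶜ ^ m : ℕ) : ℝ) = ∑ f ∈ F, (#fᶜ : ℝ) ^ m := by push_cast; rfl
      _ ≤ ∑ _f ∈ F, ((1 - p) * Fintype.card Ω) ^ m := sum_le_sum fun f hf =>
          pow_le_pow_left₀ (Nat.cast_nonneg _) (card_compl_le_of_mul_card_le (hF f hf)) m
      _ = #F * (1 - p) ^ m * (Fintype.card Ω : ℝ) ^ m := by
          rw [sum_const, nsmul_eq_mul, mul_pow, mul_assoc]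
      _ < (Fintype.card Ω : ℝ) ^ m := by nlinarith
  exact_mod_cast hsum

/-- Probabilistic existence of small hitting sets: if every member of the finite family `F` of
subsets of a nonempty finite set `Ω` has cardinality at least `p * |Ω|` and
`|F| * (1 - p)^m < 1`, then there is a hitting set for `F` of size at most `m`. -/
theorem exists_small_hitting_set (Ω : Type*) [Fintype Ω] [Nonempty Ω]
    (p : ℝ) (hp0 : 0 < p) (hp1 : p ≤ 1)
    (F : Finset (Finset Ω))
    (hF : ∀ f ∈ F, p * (Fintype.card Ω : ℝ) ≤ (f.card : ℝ))
    (m : ℕ) (hm : 0 < m)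
    (hbound : (F.card : ℝ) * (1 - p) ^ m < 1) :
    ∃ S : Finset Ω, S.card ≤ m ∧ ∀ f ∈ F, ∃ x ∈ S, x ∈ f :=
  exists_small_hitting_set_general Ω p F hF m hbound
end
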